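/- arXiv:2404.09351 — 4 statements merged into one kernel-verified Lean document; each statement's English description precedes it below -/
import Mathlib

section
/- Let $1 \le p, q < \infty$. Let $u \in A_q$ and $v \in A_p$ be weights on $\mathbb{R}^n$, and set $W = (u/v)^{1/p}$. Then $W \in A_{1 + q/p}$ and $[W]_{A_{1+q/p}} \le [u]_{A_q}^{1/p} [v]_{A_p}^{1/p}$. -/
/-!
On a cube `Q` write `W = u^{1/p} v^{-1/p}`, so that the dual weight of `W` for the exponent
`1 + q/p` is `W^{-p/q} = v^{1/q} u^{-1/q}`. Hölder's inequality with exponents `p, p'` gives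
`(⨍_Q W)^p ≤ (⨍_Q u) (⨍_Q v^{1-p'})^{p-1}`, and with exponents `q, q'` it gives
`(⨍_Q W^{-p/q})^q ≤ (⨍_Q v) (⨍_Q u^{1-q'})^{q-1}`; for `p = 1` or `q = 1` the second factor is
`(ess inf_Q v)⁻¹` resp. `(ess inf_Q u)⁻¹` and Hölder is replaced by pulling out that bound.
Multiplying the two, the `A_{1+q/p}` quantity of `W` on `Q`, raised to the power `p`, is at most
the `A_q` quantity of `u` times the `A_p` quantity of `v` on `Q`.
-/

open MeasureTheory
open scoped ENNReal

/-- The open axis-parallel cube with lower corner `c` and side length `l` in `ℝⁿ`. -/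
def cube (n : ℕ) (c : Fin n → ℝ) (l : ℝ) : Set (Fin n → ℝ) :=
  Set.univ.pi fun i => Set.Ioo (c i) (c i + l)

/-- The Muckenhoupt `A₁` constant of a weight `w` on `ℝⁿ`. -/
noncomputable def A1Const (n : ℕ) (w : (Fin n → ℝ) → ℝ) : ℝ≥0∞ :=
  ⨆ (c : Fin n → ℝ) (l : ℝ) (_ : 0 < l),
    (∫⁻ x in cube n c l, ENNReal.ofReal (w x)) / volume (cube n c l) *
      (essInf (fun x => ENNReal.ofReal (w x)) (volume.restrict (cube n c l)))⁻¹

/-- The Muckenhoupt `A_r` constant of a weight `w` on `ℝⁿ`, for `r ≥ 1`: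
for `r = 1` it is the `A₁` constant, and for `r > 1` it is
`sup_Q (⨍_Q w) (⨍_Q w^{1-r'})^{r-1}` where `1 - r' = -1/(r-1)`. -/
noncomputable def ApConst (n : ℕ) (r : ℝ) (w : (Fin n → ℝ) → ℝ) : ℝ≥0∞ :=
  if r = 1 then A1Const n w
  else
    ⨆ (c : Fin n → ℝ) (l : ℝ) (_ : 0 < l),
      (∫⁻ x in cube n c l, ENNReal.ofReal (w x)) / volume (cube n c l) *
        ((∫⁻ x in cube n c l, ENNReal.ofReal (w x ^ (-(1 : ℝ) / (r - 1)))) /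
            volume (cube n c l)) ^ (r - 1)

lemma volume_cube (n : ℕ) (c : Fin n → ℝ) (l : ℝ) :
    volume (cube n c l) = ENNReal.ofReal l ^ n := by
  simp [cube, volume_pi_pi, Real.volume_Ioo]

section Holder

variable {α : Type*} [MeasurableSpace α] {μ : Measure α}

/-- The unnormalised second factor of the `A_r` quantity, covering the `A₁` case as well. -/
noncomputable def dualMass (r : ℝ) (G : α → ℝ≥0∞) (μ : Measure α) : ℝ≥0∞ :=
  if r = 1 then (essInf G μ)⁻¹ else (∫⁻ x, G x ^ (-(1 / (r - 1))) ∂μ) ^ (r - 1)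

lemma lintegral_rpow_mul_rpow_neg_pow_le {F G : α → ℝ≥0∞} (hF : AEMeasurable F μ)
    (hG : AEMeasurable G μ) {r : ℝ} (hr : 1 < r) :
    (∫⁻ x, F x ^ (1 / r) * G x ^ (-(1 / r)) ∂μ) ^ r ≤
      (∫⁻ x, F x ∂μ) * (∫⁻ x, G x ^ (-(1 / (r - 1))) ∂μ) ^ (r - 1) := by
  have hr0 : 0 < r := by linarith
  have hr1 : r - 1 ≠ 0 := by linarith
  have hconj : r.HolderConjugate (r / (r - 1)) := .conjExponent hr
  have holder := ENNReal.lintegral_mul_le_Lp_mul_Lq μ hconj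
    (hF.pow_const (1 / r)) (hG.pow_const (-(1 / r)))
  simp only [Pi.mul_apply, ← ENNReal.rpow_mul] at holder
  rw [one_div_mul_cancel hr0.ne', show -(1 / r) * (r / (r - 1)) = -(1 / (r - 1)) by field_simp,
    one_div_div] at holder
  calc (∫⁻ x, F x ^ (1 / r) * G x ^ (-(1 / r)) ∂μ) ^ r
      ≤ ((∫⁻ x, F x ∂μ) ^ (1 / r) * (∫⁻ x, G x ^ (-(1 / (r - 1))) ∂μ) ^ ((r - 1) / r)) ^ r := by
        simpa using ENNReal.rpow_le_rpow holder hr0.le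
    _ = _ := by
        rw [ENNReal.mul_rpow_of_nonneg _ _ hr0.le, ← ENNReal.rpow_mul, ← ENNReal.rpow_mul,
          one_div_mul_cancel hr0.ne', div_mul_cancel₀ _ hr0.ne', ENNReal.rpow_one]

lemma lintegral_mul_inv_le_mul_essInf_inv {F G : α → ℝ≥0∞} (hF : AEMeasurable F μ) :
    ∫⁻ x, F x * (G x)⁻¹ ∂μ ≤ (∫⁻ x, F x ∂μ) * (essInf G μ)⁻¹ := by
  calc ∫⁻ x, F x * (G x)⁻¹ ∂μ ≤ ∫⁻ x, F x * (essInf G μ)⁻¹ ∂μ := by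
        refine lintegral_mono_ae ?_
        filter_upwards [ae_essInf_le (f := G) (μ := μ)] with x hx
        gcongr
    _ = _ := lintegral_mul_const'' _ hF

lemma lintegral_rpow_mul_rpow_neg_pow_le_dualMass {F G : α → ℝ≥0∞} (hF : AEMeasurable F μ)
    (hG : AEMeasurable G μ) {r : ℝ} (hr : 1 ≤ r) :
    (∫⁻ x, F x ^ (1 / r) * G x ^ (-(1 / r)) ∂μ) ^ r ≤ (∫⁻ x, F x ∂μ) * dualMass r G μ := by
  rcases hr.eq_or_lt with rfl | hr
  · simpa [dualMass, ENNReal.rpow_neg_one] using lintegral_mul_inv_le_mul_essInf_inv hF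
  · simpa [dualMass, hr.ne'] using lintegral_rpow_mul_rpow_neg_pow_le hF hG hr

end Holder

lemma ENNReal.div_rpow_le_of_rpow_le_mul {I J X V : ℝ≥0∞} {r : ℝ} (hr : 0 ≤ r) (hV0 : V ≠ 0)
    (hVt : V ≠ ⊤) (h : I ^ r ≤ J * X) : (I / V) ^ r ≤ J / V * (X / V ^ (r - 1)) := by
  have hVr : V ^ r = V * V ^ (r - 1) := by
    simpa using ENNReal.rpow_add 1 (r - 1) hV0 hVt
  rw [ENNReal.div_rpow_of_nonneg _ _ hr, hVr, ← ENNReal.mul_div_mul_comm (.inl hV0) (.inl hVt)]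
  exact ENNReal.div_le_div_right h _

lemma ENNReal.ofReal_div_rpow {a b : ℝ} (ha : 0 < a) (hb : 0 < b) (s : ℝ) :
    ENNReal.ofReal ((a / b) ^ s) = ENNReal.ofReal a ^ s * ENNReal.ofReal b ^ (-s) := by
  rw [← ENNReal.ofReal_rpow_of_pos (div_pos ha hb), ENNReal.ofReal_div_of_pos hb, div_eq_mul_inv,
    ENNReal.mul_rpow_of_ne_top ENNReal.ofReal_ne_top
      (ENNReal.inv_ne_top.2 (ENNReal.ofReal_pos.2 hb).ne'),
    ENNReal.inv_rpow, ← ENNReal.rpow_neg]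

lemma lintegral_cube_div_volume_mul_dualMass_le_ApConst {n : ℕ} {r : ℝ} (hr : 1 ≤ r)
    {w : (Fin n → ℝ) → ℝ} (hw : ∀ x, 0 < w x) (c : Fin n → ℝ) {l : ℝ} (hl : 0 < l) :
    (∫⁻ x in cube n c l, ENNReal.ofReal (w x)) / volume (cube n c l) *
      (dualMass r (fun x => ENNReal.ofReal (w x)) (volume.restrict (cube n c l)) /
        volume (cube n c l) ^ (r - 1)) ≤ ApConst n r w := by
  rcases hr.eq_or_lt with rfl | hr
  · simp only [dualMass, ApConst, A1Const, if_pos, sub_self, ENNReal.rpow_zero, div_one]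
    exact le_iSup₂_of_le c l (le_iSup_of_le hl le_rfl)
  · have hpow (x) : ENNReal.ofReal (w x) ^ (-(1 / (r - 1))) =
        ENNReal.ofReal (w x ^ (-1 / (r - 1))) := by
      rw [neg_div]
      exact ENNReal.ofReal_rpow_of_pos (hw x)
    simp only [dualMass, ApConst, if_neg hr.ne', hpow,
      ← ENNReal.div_rpow_of_nonneg _ _ (sub_nonneg.2 hr.le)]
    exact le_iSup₂_of_le c l (le_iSup_of_le hl le_rfl)

lemma quotient_weight_cube_le {n : ℕ} {p q : ℝ} (hp : 1 ≤ p) (hq : 1 ≤ q)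
    {u v : (Fin n → ℝ) → ℝ} (hum : Measurable u) (hvm : Measurable v)
    (hup : ∀ x, 0 < u x) (hvp : ∀ x, 0 < v x) (c : Fin n → ℝ) {l : ℝ} (hl : 0 < l) :
    (∫⁻ x in cube n c l, ENNReal.ofReal ((u x / v x) ^ (1 / p))) / volume (cube n c l) *
      ((∫⁻ x in cube n c l,
          ENNReal.ofReal (((u x / v x) ^ (1 / p)) ^ (-(1 : ℝ) / (1 + q / p - 1)))) /
        volume (cube n c l)) ^ (1 + q / p - 1) ≤
      ApConst n q u ^ (1 / p) * ApConst n p v ^ (1 / p) := by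
  have hp0 : 0 < p := by linarith
  have hq0 : 0 < q := by linarith
  set μ := volume.restrict (cube n c l)
  set m := volume (cube n c l)
  have hm0 : m ≠ 0 := by simp [m, volume_cube, hl]
  have hmt : m ≠ ⊤ := by simp [m, volume_cube]
  set U := fun x => ENNReal.ofReal (u x)
  set V := fun x => ENNReal.ofReal (v x)
  have hW (x) : ENNReal.ofReal ((u x / v x) ^ (1 / p)) = U x ^ (1 / p) * V x ^ (-(1 / p)) :=
    ENNReal.ofReal_div_rpow (hup x) (hvp x) _
  have hW' (x) : ENNReal.ofReal (((u x / v x) ^ (1 / p)) ^ (-(1 : ℝ) / (q / p))) =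
      V x ^ (1 / q) * U x ^ (-(1 / q)) := by
    rw [← Real.rpow_mul (div_pos (hup x) (hvp x)).le,
      show 1 / p * (-1 / (q / p)) = -(1 / q) by field_simp,
      ENNReal.ofReal_div_rpow (hup x) (hvp x), neg_neg, mul_comm]
  have hAp : ((∫⁻ x, U x ^ (1 / p) * V x ^ (-(1 / p)) ∂μ) / m) ^ p ≤
      (∫⁻ x, U x ∂μ) / m * (dualMass p V μ / m ^ (p - 1)) :=
    ENNReal.div_rpow_le_of_rpow_le_mul hp0.le hm0 hmt <|
      lintegral_rpow_mul_rpow_neg_pow_le_dualMass hum.ennreal_ofReal.aemeasurable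
        hvm.ennreal_ofReal.aemeasurable hp
  have hBq : ((∫⁻ x, V x ^ (1 / q) * U x ^ (-(1 / q)) ∂μ) / m) ^ q ≤
      (∫⁻ x, V x ∂μ) / m * (dualMass q U μ / m ^ (q - 1)) :=
    ENNReal.div_rpow_le_of_rpow_le_mul hq0.le hm0 hmt <|
      lintegral_rpow_mul_rpow_neg_pow_le_dualMass hvm.ennreal_ofReal.aemeasurable
        hum.ennreal_ofReal.aemeasurable hq
  simp only [show 1 + q / p - 1 = q / p by ring, hW, hW']
  set A := (∫⁻ x, U x ^ (1 / p) * V x ^ (-(1 / p)) ∂μ) / m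
  set B := (∫⁻ x, V x ^ (1 / q) * U x ^ (-(1 / q)) ∂μ) / m
  calc A * B ^ (q / p) = (A ^ p * B ^ q) ^ (1 / p) := by
        rw [ENNReal.mul_rpow_of_nonneg _ _ (by positivity), ← ENNReal.rpow_mul, ← ENNReal.rpow_mul,
          mul_one_div_cancel hp0.ne', mul_one_div, ENNReal.rpow_one]
    _ ≤ (((∫⁻ x, U x ∂μ) / m * (dualMass q U μ / m ^ (q - 1))) *
          ((∫⁻ x, V x ∂μ) / m * (dualMass p V μ / m ^ (p - 1)))) ^ (1 / p) := by
        refine ENNReal.rpow_le_rpow ?_ (by positivity)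
        calc A ^ p * B ^ q ≤ _ := mul_le_mul' hAp hBq
          _ = _ := by ring
    _ ≤ (ApConst n q u * ApConst n p v) ^ (1 / p) := by
        gcongr
        · exact lintegral_cube_div_volume_mul_dualMass_le_ApConst hq hup c hl
        · exact lintegral_cube_div_volume_mul_dualMass_le_ApConst hp hvp c hl
    _ = _ := ENNReal.mul_rpow_of_nonneg _ _ (by positivity)

theorem stmt7_general (n : ℕ) (p q : ℝ) (hp : 1 ≤ p) (hq : 1 ≤ q)
    (u v : (Fin n → ℝ) → ℝ) (hum : Measurable u) (hvm : Measurable v)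
    (hup : ∀ x, 0 < u x) (hvp : ∀ x, 0 < v x)
    (hu : ApConst n q u < ⊤) (hv : ApConst n p v < ⊤) :
    ApConst n (1 + q / p) (fun x => (u x / v x) ^ (1 / p)) ≤
        ApConst n q u ^ (1 / p) * ApConst n p v ^ (1 / p) ∧
      ApConst n (1 + q / p) (fun x => (u x / v x) ^ (1 / p)) < ⊤ := by
  have hqp : 1 + q / p ≠ 1 := by
    have : 0 < q / p := by apply div_pos <;> linarith
    linarith
  have hbound : ApConst n (1 + q / p) (fun x => (u x / v x) ^ (1 / p)) ≤
      ApConst n q u ^ (1 / p) * ApConst n p v ^ (1 / p) := by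
    simp only [ApConst, if_neg hqp]
    exact iSup_le fun c => iSup₂_le fun l hl => quotient_weight_cube_le hp hq hum hvm hup hvp c hl
  have h1p : 0 ≤ 1 / p := by positivity
  refine ⟨hbound, hbound.trans_lt (ENNReal.mul_lt_top ?_ ?_)⟩
  · exact ENNReal.rpow_lt_top_of_nonneg h1p hu.ne
  · exact ENNReal.rpow_lt_top_of_nonneg h1p hv.ne

/-- for `1 ≤ p, q < ∞`, `u ∈ A_q`, `v ∈ A_p`, the weight `W = (u/v)^{1/p}`
belongs to `A_{1+q/p}` with `[W]_{A_{1+q/p}} ≤ [u]_{A_q}^{1/p} [v]_{A_p}^{1/p}`. -/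
theorem stmt7 (n : ℕ) (p q : ℝ) (hp : 1 ≤ p) (hq : 1 ≤ q)
    (u v : (Fin n → ℝ) → ℝ) (hum : Measurable u) (hvm : Measurable v)
    (hup : ∀ x, 0 < u x) (hvp : ∀ x, 0 < v x)
    (huloc : LocallyIntegrable u volume) (hvloc : LocallyIntegrable v volume)
    (hu : ApConst n q u < ⊤) (hv : ApConst n p v < ⊤) :
    ApConst n (1 + q / p) (fun x => (u x / v x) ^ (1 / p)) ≤
        ApConst n q u ^ (1 / p) * ApConst n p v ^ (1 / p) ∧
      ApConst n (1 + q / p) (fun x => (u x / v x) ^ (1 / p)) < ⊤ :=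
  stmt7_general n p q hp hq u v hum hvm hup hvp hu hv
end

section
/- Let $1 < p < \infty$, let $u \in A_1$, and let $v$ be a positive function with $v, v u \in L^1_{loc}(\mathbb{R}^n)$ such that $v \in A_p^{\mathcal{R}}(u)$. Then $uv \in A_p^{\mathcal{R}}$ and $[uv]_{A_p^{\mathcal{R}}} \le [u]_{A_1} [v]_{A_p^{\mathcal{R}}(u)}$. -/
/-!
On a cube `Q` put `m = essinf_Q u`. Since `u ≥ m` a.e. on `Q`, we have
`χ_Q (uv)⁻¹ ≤ m⁻¹ χ_Q v⁻¹` a.e., and the measure `uv dx` is `v d(u dx)`, so the weak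
`L^{p',∞}` norm of `χ_Q (uv)⁻¹` is at most `m⁻¹` times that of `χ_Q v⁻¹`. Dividing by
`|Q|` instead of `u(Q)` costs the factor `u(Q) / |Q|`, and `(u(Q) / |Q|) m⁻¹ ≤ [u]_{A₁}`.
Finiteness of `[u]_{A₁}` also gives `0 < m` and `u(Q) < ∞`, which make these manipulations
legal.
-/

open MeasureTheory
open scoped ENNReal

/-- The weak `L^{p,∞}(μ)` quasi-norm. -/
noncomputable def wkNormMu {X : Type*} [MeasurableSpace X] (μ : Measure X) (p : ℝ)
    (g : X → ℝ) : ℝ≥0∞ :=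
  ⨆ (t : ℝ) (_ : 0 < t), ENNReal.ofReal t * μ {x | t < |g x|} ^ (1 / p)

/-- The restricted weak-type constant `[v]_{A_p^𝓡(μ)}` relative to a base measure `μ`:
`sup_Q ((v dμ)(Q))^{1/p} ‖χ_Q v⁻¹‖_{L^{p',∞}(v dμ)} / μ(Q)`.
Taking `μ` the Lebesgue measure recovers `[v]_{A_p^𝓡}`. -/
noncomputable def ApRConst (n : ℕ) (μ : Measure (Fin n → ℝ)) (p : ℝ)
    (v : (Fin n → ℝ) → ℝ) : ℝ≥0∞ :=
  ⨆ (c : Fin n → ℝ) (l : ℝ) (_ : 0 < l),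
    (μ.withDensity fun x => ENNReal.ofReal (v x)) (cube n c l) ^ (1 / p) *
      wkNormMu (μ.withDensity fun x => ENNReal.ofReal (v x)) (p / (p - 1))
        ((cube n c l).indicator fun x => (v x)⁻¹) / μ (cube n c l)

lemma mul_abs_indicator_inv_mul_le {X : Type*} {s : Set X} {u v : X → ℝ} {r : ℝ} {x : X}
    (hu : 0 < u x) (hv : 0 < v x) (hr : x ∈ s → r ≤ u x) :
    r * |s.indicator (fun x => (u x * v x)⁻¹) x| ≤ |s.indicator (fun x => (v x)⁻¹) x| := by
  by_cases hx : x ∈ s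
  · rw [Set.indicator_of_mem hx, Set.indicator_of_mem hx, abs_of_pos (by positivity),
      abs_of_pos (by positivity), mul_inv, ← mul_assoc, ← div_eq_mul_inv]
    exact mul_le_of_le_one_left (by positivity) ((div_le_one hu).mpr (hr hx))
  · simp [Set.indicator_of_notMem hx]

section WeightedRatios

variable {X : Type*} [MeasurableSpace X]

noncomputable def a1Ratio (μ : Measure X) (w : X → ℝ) (s : Set X) : ℝ≥0∞ :=
  (∫⁻ x in s, ENNReal.ofReal (w x) ∂μ) / μ s *
    (essInf (fun x => ENNReal.ofReal (w x)) (μ.restrict s))⁻¹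

noncomputable def apRRatio (μ : Measure X) (p : ℝ) (v : X → ℝ) (s : Set X) : ℝ≥0∞ :=
  (μ.withDensity fun x => ENNReal.ofReal (v x)) s ^ (1 / p) *
    wkNormMu (μ.withDensity fun x => ENNReal.ofReal (v x)) (p / (p - 1))
      (s.indicator fun x => (v x)⁻¹) / μ s

lemma essInf_ofReal_ne_top {μ : Measure X} (hμ : μ ≠ 0) (w : X → ℝ) :
    essInf (fun x => ENNReal.ofReal (w x)) μ ≠ ⊤ := by
  have := ae_neBot.mpr hμ
  obtain ⟨x, hx⟩ := (ae_essInf_le (μ := μ) (f := fun x => ENNReal.ofReal (w x))).exists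
  exact ne_top_of_le_ne_top ENNReal.ofReal_ne_top hx

lemma setLIntegral_ofReal_ne_zero {μ : Measure X} {w : X → ℝ} (hw : Measurable w)
    (hpos : ∀ x, 0 < w x) {s : Set X} (hs : μ s ≠ 0) :
    ∫⁻ x in s, ENNReal.ofReal (w x) ∂μ ≠ 0 := by
  have hsupp : Function.support (fun x => ENNReal.ofReal (w x)) = Set.univ :=
    Set.eq_univ_of_forall fun x => by simpa using hpos x
  rw [← pos_iff_ne_zero, setLIntegral_pos_iff hw.ennreal_ofReal, hsupp, Set.univ_inter]
  exact pos_iff_ne_zero.mpr hs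

lemma lintegral_ne_top_and_essInf_ne_zero_of_a1Ratio_ne_top {μ : Measure X} {w : X → ℝ}
    (hw : Measurable w) (hpos : ∀ x, 0 < w x) {s : Set X} (hs0 : μ s ≠ 0)
    (hstop : μ s ≠ ⊤)
    (h : a1Ratio μ w s ≠ ⊤) :
    ∫⁻ x in s, ENNReal.ofReal (w x) ∂μ ≠ ⊤ ∧
      essInf (fun x => ENNReal.ofReal (w x)) (μ.restrict s) ≠ 0 := by
  have hint0 := setLIntegral_ofReal_ne_zero hw hpos hs0
  have hess := essInf_ofReal_ne_top (mt Measure.restrict_eq_zero.mp hs0) w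
  simp only [a1Ratio, ne_eq, ENNReal.mul_eq_top, ENNReal.inv_eq_top, ENNReal.inv_eq_zero,
    ENNReal.div_eq_top, ENNReal.div_eq_zero_iff] at h
  tauto

lemma wkNormMu_le_of_ae_mul_le {μ : Measure X} {q : ℝ} (hq : 0 ≤ q) {f g : X → ℝ} {r : ℝ}
    (hr : 0 < r) (hfg : ∀ᵐ x ∂μ, r * |f x| ≤ |g x|) :
    wkNormMu μ q f ≤ (ENNReal.ofReal r)⁻¹ * wkNormMu μ q g := by
  refine iSup₂_le fun t ht => ?_
  have hlevel : μ {x | t < |f x|} ≤ μ {x | r * t < |g x|} := by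
    refine measure_mono_ae ?_
    filter_upwards [hfg] with x hx htx
    exact (mul_lt_mul_of_pos_left htx hr).trans_le hx
  have hr' : ENNReal.ofReal r ≠ 0 := by simpa using hr
  calc ENNReal.ofReal t * μ {x | t < |f x|} ^ (1 / q)
      ≤ ENNReal.ofReal t * μ {x | r * t < |g x|} ^ (1 / q) := by
        gcongr
    _ = (ENNReal.ofReal r)⁻¹ * (ENNReal.ofReal (r * t) * μ {x | r * t < |g x|} ^ (1 / q)) := by
        rw [ENNReal.ofReal_mul hr.le, ← mul_assoc, ← mul_assoc,
          ENNReal.inv_mul_cancel hr' ENNReal.ofReal_ne_top, one_mul]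
    _ ≤ (ENNReal.ofReal r)⁻¹ * wkNormMu μ q g := by
        gcongr
        exact le_iSup₂_of_le (r * t) (mul_pos hr ht) le_rfl

lemma withDensity_ofReal_mul (μ : Measure X) {u v : X → ℝ} (hu : Measurable u)
    (hv : Measurable v) (hu0 : ∀ x, 0 ≤ u x) :
    (μ.withDensity fun x => ENNReal.ofReal (u x * v x)) =
      (μ.withDensity fun x => ENNReal.ofReal (u x)).withDensity
        fun x => ENNReal.ofReal (v x) := by
  rw [← withDensity_mul _ hu.ennreal_ofReal hv.ennreal_ofReal]
  congr 1
  funext x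
  exact ENNReal.ofReal_mul (hu0 x)

lemma apRRatio_mul_le {μ : Measure X} {p : ℝ} (hp : 1 < p) {u v : X → ℝ}
    (hu : Measurable u) (hv : Measurable v) (hupos : ∀ x, 0 < u x) (hvpos : ∀ x, 0 < v x)
    {s : Set X} (hs : MeasurableSet s) (hs0 : μ s ≠ 0)
    (hint : ∫⁻ x in s, ENNReal.ofReal (u x) ∂μ ≠ ⊤)
    (hess : essInf (fun x => ENNReal.ofReal (u x)) (μ.restrict s) ≠ 0) :
    apRRatio μ p (fun x => u x * v x) s ≤
      a1Ratio μ u s * apRRatio (μ.withDensity fun x => ENNReal.ofReal (u x)) p v s := by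
  set e := essInf (fun x => ENNReal.ofReal (u x)) (μ.restrict s)
  set ν := (μ.withDensity fun x => ENNReal.ofReal (u x)).withDensity
    fun x => ENNReal.ofReal (v x)
  set U := ∫⁻ x in s, ENNReal.ofReal (u x) ∂μ
  set W := fun g : X → ℝ => wkNormMu ν (p / (p - 1)) (s.indicator g)
  have he_top : e ≠ ⊤ := essInf_ofReal_ne_top (mt Measure.restrict_eq_zero.mp hs0) u
  have he : ENNReal.ofReal e.toReal = e := ENNReal.ofReal_toReal he_top
  have hlower : ∀ᵐ x ∂ν, x ∈ s → e.toReal ≤ u x := by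
    have hae : ∀ᵐ x ∂μ, x ∈ s → e ≤ ENNReal.ofReal (u x) :=
      (ae_restrict_iff' hs).mp ae_essInf_le
    refine ((withDensity_absolutelyContinuous _ _).trans
      (withDensity_absolutelyContinuous _ _)).ae_le ?_
    filter_upwards [hae] with x hx hxs
    rw [← ENNReal.ofReal_le_ofReal_iff (hupos x).le, he]
    exact hx hxs
  have hweak : W (fun x => (u x * v x)⁻¹) ≤ e⁻¹ * W (fun x => (v x)⁻¹) := by
    rw [← he]
    refine wkNormMu_le_of_ae_mul_le (div_nonneg (by linarith) (by linarith))
      (ENNReal.toReal_pos hess he_top) ?_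
    filter_upwards [hlower] with x hx
    exact mul_abs_indicator_inv_mul_le (hupos x) (hvpos x) hx
  have hμu : (μ.withDensity fun x => ENNReal.ofReal (u x)) s = U := withDensity_apply _ hs
  have hcancel : U * U⁻¹ = 1 :=
    ENNReal.mul_inv_cancel (setLIntegral_ofReal_ne_zero hu hupos hs0) hint
  rw [apRRatio, apRRatio, a1Ratio, withDensity_ofReal_mul μ hu hv fun x => (hupos x).le, hμu]
  calc ν s ^ (1 / p) * W (fun x => (u x * v x)⁻¹) / μ s
      ≤ ν s ^ (1 / p) * (e⁻¹ * W (fun x => (v x)⁻¹)) / μ s := by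
        gcongr
    _ = U * U⁻¹ * (ν s ^ (1 / p) * (e⁻¹ * W (fun x => (v x)⁻¹)) / μ s) := by
        rw [hcancel, one_mul]
    _ = U / μ s * e⁻¹ * (ν s ^ (1 / p) * W (fun x => (v x)⁻¹) / U) := by
        simp only [div_eq_mul_inv]
        ring

end WeightedRatios

lemma measurableSet_cube (n : ℕ) (c : Fin n → ℝ) (l : ℝ) : MeasurableSet (cube n c l) :=
  MeasurableSet.univ_pi fun _ => measurableSet_Ioo

lemma volume_cube_ne_zero (n : ℕ) (c : Fin n → ℝ) {l : ℝ} (hl : 0 < l) :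
    volume (cube n c l) ≠ 0 := by
  simp [volume_cube, hl]

lemma volume_cube_ne_top (n : ℕ) (c : Fin n → ℝ) (l : ℝ) : volume (cube n c l) ≠ ⊤ := by
  simp [volume_cube]

lemma a1Ratio_cube_le_A1Const (n : ℕ) (w : (Fin n → ℝ) → ℝ) (c : Fin n → ℝ) {l : ℝ}
    (hl : 0 < l) : a1Ratio volume w (cube n c l) ≤ A1Const n w :=
  le_iSup₂_of_le (f := fun c l => ⨆ _ : 0 < l, a1Ratio volume w (cube n c l)) c l
    (le_iSup_of_le hl le_rfl)

lemma apRRatio_cube_le_ApRConst (n : ℕ) (μ : Measure (Fin n → ℝ)) (p : ℝ)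
    (v : (Fin n → ℝ) → ℝ) (c : Fin n → ℝ) {l : ℝ} (hl : 0 < l) :
    apRRatio μ p v (cube n c l) ≤ ApRConst n μ p v :=
  le_iSup₂_of_le (f := fun c l => ⨆ _ : 0 < l, apRRatio μ p v (cube n c l)) c l
    (le_iSup_of_le hl le_rfl)

theorem stmt8_general (n : ℕ) (p : ℝ) (hp : 1 < p)
    (u v : (Fin n → ℝ) → ℝ) (hum : Measurable u) (hvm : Measurable v)
    (hup : ∀ x, 0 < u x) (hvp : ∀ x, 0 < v x)
    (huA1 : A1Const n u < ⊤) :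
    ApRConst n volume p (fun x => u x * v x) ≤
      A1Const n u *
        ApRConst n (volume.withDensity fun x => ENNReal.ofReal (u x)) p v := by
  refine iSup₂_le fun c l => iSup_le fun hl => ?_
  have hQ0 := volume_cube_ne_zero n c hl
  have hA1 := a1Ratio_cube_le_A1Const n u c hl
  obtain ⟨hint, hess⟩ := lintegral_ne_top_and_essInf_ne_zero_of_a1Ratio_ne_top hum hup hQ0
    (volume_cube_ne_top n c l) (ne_top_of_le_ne_top huA1.ne hA1)
  calc apRRatio volume p (fun x => u x * v x) (cube n c l)
      ≤ a1Ratio volume u (cube n c l) *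
          apRRatio (volume.withDensity fun x => ENNReal.ofReal (u x)) p v (cube n c l) :=
        apRRatio_mul_le hp hum hvm hup hvp (measurableSet_cube n c l) hQ0 hint hess
    _ ≤ _ := mul_le_mul' hA1 (apRRatio_cube_le_ApRConst n _ p v c hl)

/-- for `1 < p < ∞`, `u ∈ A₁` and `v ∈ A_p^𝓡(u)` (with `v, vu` locally
integrable), one has `uv ∈ A_p^𝓡` with `[uv]_{A_p^𝓡} ≤ [u]_{A₁} [v]_{A_p^𝓡(u)}`. -/
theorem stmt8 (n : ℕ) (p : ℝ) (hp : 1 < p)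
    (u v : (Fin n → ℝ) → ℝ) (hum : Measurable u) (hvm : Measurable v)
    (hup : ∀ x, 0 < u x) (hvp : ∀ x, 0 < v x)
    (huloc : LocallyIntegrable u volume)
    (hvloc : LocallyIntegrable v volume)
    (hvuloc : LocallyIntegrable (fun x => v x * u x) volume)
    (huA1 : A1Const n u < ⊤)
    (hvR : ApRConst n (volume.withDensity fun x => ENNReal.ofReal (u x)) p v < ⊤) :
    ApRConst n volume p (fun x => u x * v x) ≤
      A1Const n u *
        ApRConst n (volume.withDensity fun x => ENNReal.ofReal (u x)) p v :=
  stmt8_general n p hp u v hum hvm hup hvp huA1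
end

section
/- Let $1 \le q < p < \infty$, let $w$ be a weight on $\mathbb{R}^n$, let $f$ be measurable, and let $h$ be a measurable function with $h(x) \ge |f(x)|$ for a.e. $x$. Set $v = h^{q-p} w$. Then $\|f\|_{L^{p,1}(v)} \le \frac{p}{q} \, \|f\|_{L^{q, q/p}(w)}^{q/p}$. -/
open MeasureTheory
open scoped ENNReal

/-- The Lorentz quasi-norm `‖f‖_{L^{r,s}(ϖ)}` with respect to a weight `ϖ` on `ℝⁿ`:
`(r ∫₀^∞ y^s λ_f^ϖ(y)^{s/r} dy/y)^{1/s}`, where `λ_f^ϖ(y) = ∫_{{|f|>y}} ϖ`. -/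
noncomputable def lorentzW (n : ℕ) (ϖ : (Fin n → ℝ) → ℝ) (r s : ℝ)
    (f : (Fin n → ℝ) → ℝ) : ℝ≥0∞ :=
  (ENNReal.ofReal r * ∫⁻ y in Set.Ioi (0 : ℝ),
      ENNReal.ofReal y ^ s *
        (∫⁻ x in {x | y < |f x|}, ENNReal.ofReal (ϖ x)) ^ (s / r) *
          (ENNReal.ofReal y)⁻¹) ^ (1 / s)

/-!
On `{|f| > y}` we have `h ≥ |f| > y`, so the negative power `h^{q-p}` is at most `y^{q-p}`; hence
`λ_f^v(y) ≤ y^{q-p} λ_f^w(y)`. Taking `1/p`-th powers turns the integrand `y · λ_f^v(y)^{1/p}` of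
`‖f‖_{L^{p,1}(v)}` into at most `y^{q/p} λ_f^w(y)^{1/p}`, the integrand of
`‖f‖_{L^{q,q/p}(w)}^{q/p}`; the constants `p` and `q` in front account for the factor `p/q`.
-/

theorem lorentzW_rpow_self (n : ℕ) (ϖ : (Fin n → ℝ) → ℝ) (r : ℝ) {s : ℝ} (hs : s ≠ 0)
    (f : (Fin n → ℝ) → ℝ) :
    lorentzW n ϖ r s f ^ s =
      ENNReal.ofReal r * ∫⁻ y in Set.Ioi (0 : ℝ),
        ENNReal.ofReal y ^ s *
          (∫⁻ x in {x | y < |f x|}, ENNReal.ofReal (ϖ x)) ^ (s / r) * (ENNReal.ofReal y)⁻¹ := by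
  rw [lorentzW, ← ENNReal.rpow_mul, one_div_mul_cancel hs, ENNReal.rpow_one]

theorem setLIntegral_rpow_mul_le {α : Type*} [MeasurableSpace α] {μ : Measure α}
    {f h w : α → ℝ} (hfm : Measurable f) (hfh : ∀ᵐ x ∂μ, |f x| ≤ h x)
    {a y : ℝ} (ha : a ≤ 0) (hy : 0 < y) :
    ∫⁻ x in {x | y < |f x|}, ENNReal.ofReal (h x ^ a * w x) ∂μ ≤
      ENNReal.ofReal (y ^ a) * ∫⁻ x in {x | y < |f x|}, ENNReal.ofReal (w x) ∂μ := by
  have hS : MeasurableSet {x | y < |f x|} := measurableSet_lt measurable_const hfm.abs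
  rw [← lintegral_const_mul' _ _ ENNReal.ofReal_ne_top]
  refine lintegral_mono_ae ?_
  filter_upwards [ae_restrict_of_ae hfh, ae_restrict_mem hS] with x hfx (hyx : y < |f x|)
  have hyh : y ≤ h x := hyx.le.trans hfx
  rw [ENNReal.ofReal_mul (Real.rpow_nonneg (hy.le.trans hyh) _)]
  exact mul_le_mul_left (ENNReal.ofReal_le_ofReal (Real.rpow_le_rpow_of_nonpos hy hyh ha)) _

theorem ENNReal.mul_rpow_inv_le_of_le_rpow_mul {y L M : ℝ≥0∞} (hy₀ : y ≠ 0) (hy : y ≠ ⊤)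
    {p q : ℝ} (hp : 0 < p) (hLM : L ≤ y ^ (q - p) * M) :
    y * L ^ p⁻¹ ≤ y ^ (q / p) * M ^ p⁻¹ := by
  have hexp : q / p = 1 + (q - p) * p⁻¹ := by field_simp; ring
  calc y * L ^ p⁻¹ ≤ y * (y ^ (q - p) * M) ^ p⁻¹ := by gcongr
    _ = y ^ (q / p) * M ^ p⁻¹ := by
      rw [ENNReal.mul_rpow_of_nonneg _ _ (inv_nonneg.2 hp.le), ← ENNReal.rpow_mul, hexp,
        ENNReal.rpow_add _ _ hy₀ hy, ENNReal.rpow_one, mul_assoc]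

theorem stmt12_general (n : ℕ) (p q : ℝ) (hq : 1 ≤ q) (hqp : q < p)
    (w f h : (Fin n → ℝ) → ℝ)
    (hfm : Measurable f)
    (hfh : ∀ᵐ x ∂volume, |f x| ≤ h x) :
    lorentzW n (fun x => h x ^ (q - p) * w x) p 1 f ≤
      ENNReal.ofReal (p / q) * lorentzW n w q (q / p) f ^ (q / p) := by
  have hq0 : 0 < q := one_pos.trans_le hq
  have hp0 : 0 < p := hq0.trans hqp
  rw [← ENNReal.rpow_one (lorentzW ..), lorentzW_rpow_self _ _ _ one_ne_zero,
    lorentzW_rpow_self _ _ _ (div_pos hq0 hp0).ne', ← mul_assoc,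
    ← ENNReal.ofReal_mul (div_pos hp0 hq0).le, div_mul_cancel₀ p hq0.ne',
    div_right_comm, div_self hq0.ne', one_div]
  gcongr ENNReal.ofReal p * ?_
  refine setLIntegral_mono' measurableSet_Ioi fun y (hy : 0 < y) => ?_
  gcongr ?_ * _
  rw [ENNReal.rpow_one]
  refine ENNReal.mul_rpow_inv_le_of_le_rpow_mul (by simpa using hy) ENNReal.ofReal_ne_top hp0 ?_
  rw [ENNReal.ofReal_rpow_of_pos hy]
  exact setLIntegral_rpow_mul_le hfm hfh (by linarith) hy

/-- for `1 ≤ q < p < ∞`, a weight `w`, `h ≥ |f|` a.e., and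
`v = h^{q-p} w`, one has `‖f‖_{L^{p,1}(v)} ≤ (p/q) ‖f‖_{L^{q,q/p}(w)}^{q/p}`. -/
theorem stmt12 (n : ℕ) (p q : ℝ) (hq : 1 ≤ q) (hqp : q < p)
    (w f h : (Fin n → ℝ) → ℝ) (hwm : Measurable w) (hwp : ∀ x, 0 < w x)
    (hfm : Measurable f) (hhm : Measurable h)
    (hfh : ∀ᵐ x ∂volume, |f x| ≤ h x) :
    lorentzW n (fun x => h x ^ (q - p) * w x) p 1 f ≤
      ENNReal.ofReal (p / q) * lorentzW n w q (q / p) f ^ (q / p) :=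
  stmt12_general n p q hq hqp w f h hfm hfh
end

section
/- Fix $1 \le q \le p < \infty$ with $p > 1$, and an integer $N \ge 1$. Let $w \in \widehat{A}_{q,N}$ and $h \in L^1_{loc}(\mathbb{R}^n)$ with $Mh$ positive and finite a.e. Then $v = (Mh)^{q-p} w$ belongs to $\widehat{A}_{p,N+1}$ and $\|v\|_{\widehat{A}_{p,N+1}} \le \|w\|_{\widehat{A}_{q,N}}^{q/p}$. -/
open MeasureTheory Finset
open scoped ENNReal

/-- The Hardy–Littlewood maximal function over axis-parallel cubes. -/
noncomputable def maxFn (n : ℕ) (h : (Fin n → ℝ) → ℝ) (x : Fin n → ℝ) : ℝ≥0∞ :=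
  ⨆ (c : Fin n → ℝ) (l : ℝ) (_ : 0 < l) (_ : x ∈ cube n c l),
    (∫⁻ y in cube n c l, ENNReal.ofReal |h y|) / volume (cube n c l)

/-- `u ∈ A₁` realizes a representation of `w` in the class `Â_{r,N}`, i.e.
`w = (∏_{i<N} (M hᵢ)^{θᵢ})^{1-r} u` a.e. for some `hᵢ ∈ L¹_loc` and `θᵢ ∈ (0,1]`
with `∑ θᵢ = 1`. -/
def AhatRep (n : ℕ) (r : ℝ) (N : ℕ) (w u : (Fin n → ℝ) → ℝ) : Prop :=
  ∃ (h : Fin N → (Fin n → ℝ) → ℝ) (θ : Fin N → ℝ),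
    (∀ i, Measurable (h i)) ∧ (∀ i, LocallyIntegrable (h i) volume) ∧
    (∀ i, 0 < θ i ∧ θ i ≤ 1) ∧ (∑ i, θ i = 1) ∧
    Measurable u ∧ (∀ x, 0 < u x) ∧ LocallyIntegrable u volume ∧ A1Const n u < ⊤ ∧
    ∀ᵐ x ∂volume, w x = (∏ i, (maxFn n (h i) x).toReal ^ θ i) ^ (1 - r) * u x

/-- Membership in the class `Â_{r,N}`. -/
def memAhat (n : ℕ) (r : ℝ) (N : ℕ) (w : (Fin n → ℝ) → ℝ) : Prop :=
  ∃ u, AhatRep n r N w u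

/-- The constant `‖w‖_{Â_{r,N}} = inf [u]_{A₁}^{1/r}`, infimum over all representations. -/
noncomputable def AhatConst (n : ℕ) (r : ℝ) (N : ℕ) (w : (Fin n → ℝ) → ℝ) : ℝ≥0∞ :=
  ⨅ (u : (Fin n → ℝ) → ℝ) (_ : AhatRep n r N w u), A1Const n u ^ (1 / r)

/-!
Write `w = G^{1-q} u` with `u ∈ A₁` and `G` a weighted geometric mean of maximal functions. With
`a = (p - q)/(p - 1)` and `b = (q - 1)/(p - 1)`, nonnegative with `a + b = 1`, one has
`(Mh)^{q-p} G^{1-q} = ((Mh)^a G^b)^{1-p}`, and `(Mh)^a G^b` is again a weighted geometric mean of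
maximal functions, now of `N + 1` of them (when `a` or `b` vanishes, a factor is split in two).
So `v` is represented in `Â_{p,N+1}` with the same `u`, whence `‖v‖ ≤ inf [u]_{A₁}^{1/p} = ‖w‖^{q/p}`.
-/

def IsMaxFnGeomMean (n N : ℕ) (G : (Fin n → ℝ) → ℝ) : Prop :=
  ∃ (h : Fin N → (Fin n → ℝ) → ℝ) (θ : Fin N → ℝ),
    (∀ i, Measurable (h i)) ∧ (∀ i, LocallyIntegrable (h i) volume) ∧
    (∀ i, 0 < θ i ∧ θ i ≤ 1) ∧ ∑ i, θ i = 1 ∧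
    G = fun x => ∏ i, (maxFn n (h i) x).toReal ^ θ i

def IsA1Weight (n : ℕ) (u : (Fin n → ℝ) → ℝ) : Prop :=
  Measurable u ∧ (∀ x, 0 < u x) ∧ LocallyIntegrable u volume ∧ A1Const n u < ⊤

theorem ahatRep_iff {n N : ℕ} {r : ℝ} {w u : (Fin n → ℝ) → ℝ} :
    AhatRep n r N w u ↔ IsA1Weight n u ∧
      ∃ G, IsMaxFnGeomMean n N G ∧ ∀ᵐ x ∂volume, w x = G x ^ (1 - r) * u x := by
  constructor
  · rintro ⟨h, θ, hm, hl, hθ, hsum, hum, hupos, hul, hA1, hw⟩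
    exact ⟨⟨hum, hupos, hul, hA1⟩, _, ⟨h, θ, hm, hl, hθ, hsum, rfl⟩, hw⟩
  · rintro ⟨⟨hum, hupos, hul, hA1⟩, _, ⟨h, θ, hm, hl, hθ, hsum, rfl⟩, hw⟩
    exact ⟨h, θ, hm, hl, hθ, hsum, hum, hupos, hul, hA1, hw⟩

namespace IsMaxFnGeomMean

variable {n N K : ℕ} {G G₁ G₂ : (Fin n → ℝ) → ℝ}

theorem nonneg (hG : IsMaxFnGeomMean n N G) (x : Fin n → ℝ) : 0 ≤ G x := by
  obtain ⟨h, θ, -, -, -, -, rfl⟩ := hG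
  exact prod_nonneg fun i _ => Real.rpow_nonneg ENNReal.toReal_nonneg _

theorem pos (hG : IsMaxFnGeomMean n N G) : 0 < N := by
  obtain ⟨h, θ, -, -, -, hsum, -⟩ := hG
  rcases N with _ | N
  · simp at hsum
  · exact N.succ_pos

theorem of_maxFn {h : (Fin n → ℝ) → ℝ} (hm : Measurable h) (hl : LocallyIntegrable h volume) :
    IsMaxFnGeomMean n 1 fun x => (maxFn n h x).toReal :=
  ⟨fun _ => h, fun _ => 1, fun _ => hm, fun _ => hl, fun _ => ⟨one_pos, le_rfl⟩, by simp,
    by simp⟩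

/-- Split the first factor `(M h₀)^{θ₀}` into two copies of `(M h₀)^{θ₀/2}`. -/
theorem succ (hG : IsMaxFnGeomMean n N G) : IsMaxFnGeomMean n (N + 1) G := by
  obtain ⟨M, rfl⟩ : ∃ M, N = M + 1 := Nat.exists_eq_add_one.mpr hG.pos
  obtain ⟨h, θ, hm, hl, hθ, hsum, rfl⟩ := hG
  refine ⟨Fin.cons (h 0) h, Fin.cons (θ 0 / 2) (Fin.cons (θ 0 / 2) (Fin.tail θ)),
    Fin.cases (hm 0) hm, Fin.cases (hl 0) hl, ?_, ?_, ?_⟩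
  · have hhalf : 0 < θ 0 / 2 ∧ θ 0 / 2 ≤ 1 := by
      constructor <;> linarith [hθ 0]
    exact Fin.cases hhalf (Fin.cases hhalf fun i => hθ i.succ)
  · rw [Fin.sum_univ_succ] at hsum
    simp only [Fin.sum_univ_succ, Fin.cons_zero, Fin.cons_succ, Fin.tail]
    linarith
  · funext x
    simp only [Fin.prod_univ_succ, Fin.cons_zero, Fin.cons_succ, Fin.tail]
    have hθ0 : 0 ≤ θ 0 / 2 := by linarith [hθ 0]
    rw [← mul_assoc, ← Real.rpow_add_of_nonneg ENNReal.toReal_nonneg hθ0 hθ0, add_halves]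

theorem mono (hG : IsMaxFnGeomMean n N G) (hNK : N ≤ K) : IsMaxFnGeomMean n K G :=
  Nat.le_induction hG (fun _ _ => succ) K hNK

theorem rpow_mul_rpow_of_pos (hG₁ : IsMaxFnGeomMean n K G₁) (hG₂ : IsMaxFnGeomMean n N G₂)
    {a b : ℝ} (ha : 0 < a) (hb : 0 < b) (hab : a + b = 1) :
    IsMaxFnGeomMean n (K + N) fun x => G₁ x ^ a * G₂ x ^ b := by
  obtain ⟨h₁, θ₁, hm₁, hl₁, hθ₁, hsum₁, rfl⟩ := hG₁
  obtain ⟨h₂, θ₂, hm₂, hl₂, hθ₂, hsum₂, rfl⟩ := hG₂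
  have hscale {c t : ℝ} (hc : 0 < c) (hc1 : c ≤ 1) (ht : 0 < t ∧ t ≤ 1) : 0 < c * t ∧ c * t ≤ 1 :=
    ⟨mul_pos hc ht.1, mul_le_one₀ hc1 ht.1.le ht.2⟩
  refine ⟨Fin.append h₁ h₂, Fin.append (fun i => a * θ₁ i) (fun i => b * θ₂ i),
    Fin.addCases (by simpa using hm₁) (by simpa using hm₂),
    Fin.addCases (by simpa using hl₁) (by simpa using hl₂),
    Fin.addCases (by simpa using fun i => hscale ha (by linarith) (hθ₁ i))
      (by simpa using fun i => hscale hb (by linarith) (hθ₂ i)), ?_, ?_⟩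
  · simp [Fin.sum_univ_add, ← mul_sum, hsum₁, hsum₂, hab]
  · funext x
    have hmean {N : ℕ} (h : Fin N → (Fin n → ℝ) → ℝ) (θ : Fin N → ℝ) (c : ℝ) :
        (∏ i, (maxFn n (h i) x).toReal ^ θ i) ^ c = ∏ i, (maxFn n (h i) x).toReal ^ (c * θ i) := by
      rw [← Real.finsetProd_rpow _ _ fun i _ => Real.rpow_nonneg ENNReal.toReal_nonneg _]
      simp only [← Real.rpow_mul ENNReal.toReal_nonneg, mul_comm c]
    simp [Fin.prod_univ_add, hmean]

theorem rpow_mul_rpow (hG₁ : IsMaxFnGeomMean n K G₁) (hG₂ : IsMaxFnGeomMean n N G₂)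
    {a b : ℝ} (ha : 0 ≤ a) (hb : 0 ≤ b) (hab : a + b = 1) :
    IsMaxFnGeomMean n (K + N) fun x => G₁ x ^ a * G₂ x ^ b := by
  rcases ha.eq_or_lt with rfl | ha
  · obtain rfl : b = 1 := by linarith
    simpa using hG₂.mono (Nat.le_add_left N K)
  rcases hb.eq_or_lt with rfl | hb
  · obtain rfl : a = 1 := by linarith
    simpa using hG₁.mono (Nat.le_add_right K N)
  exact rpow_mul_rpow_of_pos hG₁ hG₂ ha hb hab

end IsMaxFnGeomMean

theorem AhatRep.maxFn_rpow_mul {n N : ℕ} {p q : ℝ} (hq : 1 ≤ q) (hqp : q ≤ p) (hp : 1 < p)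
    {w u h : (Fin n → ℝ) → ℝ} (hm : Measurable h) (hl : LocallyIntegrable h volume)
    (hrep : AhatRep n q N w u) :
    AhatRep n p (N + 1) (fun x => (maxFn n h x).toReal ^ (q - p) * w x) u := by
  rw [ahatRep_iff] at hrep ⊢
  obtain ⟨hu, G, hG, hw⟩ := hrep
  have hp1 : 0 < p - 1 := by linarith
  refine ⟨hu, _, hG.rpow_mul_rpow (.of_maxFn hm hl) (a := (q - 1) / (p - 1))
    (b := (p - q) / (p - 1)) (div_nonneg (by linarith) hp1.le) (div_nonneg (by linarith) hp1.le)
    (by field_simp; ring), ?_⟩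
  filter_upwards [hw] with x hx
  have hM : 0 ≤ (maxFn n h x).toReal := ENNReal.toReal_nonneg
  rw [hx, Real.mul_rpow (Real.rpow_nonneg (hG.nonneg x) _) (Real.rpow_nonneg hM _),
    ← Real.rpow_mul (hG.nonneg x), ← Real.rpow_mul hM,
    show (q - 1) / (p - 1) * (1 - p) = 1 - q by field_simp; ring,
    show (p - q) / (p - 1) * (1 - p) = q - p by field_simp; ring]
  ring

theorem stmt17_general (n : ℕ) (p q : ℝ) (hq : 1 ≤ q) (hqp : q ≤ p) (hp : 1 < p)
    (N : ℕ) (w : (Fin n → ℝ) → ℝ) (hw : memAhat n q N w)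
    (h : (Fin n → ℝ) → ℝ) (hhm : Measurable h) (hhloc : LocallyIntegrable h volume) :
    memAhat n p (N + 1) (fun x => (maxFn n h x).toReal ^ (q - p) * w x) ∧
      AhatConst n p (N + 1) (fun x => (maxFn n h x).toReal ^ (q - p) * w x) ≤
        AhatConst n q N w ^ (q / p) := by
  have hlift (u) (hu : AhatRep n q N w u) := hu.maxFn_rpow_mul hq hqp hp hhm hhloc
  obtain ⟨u, hu⟩ := hw
  refine ⟨⟨u, hlift u hu⟩, ?_⟩
  have hexp : 1 / q * (q / p) = 1 / p := by field_simp
  have hpow := (ENNReal.orderIsoRpow (q / p) (by positivity)).map_iInf₂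
    fun u (_ : AhatRep n q N w u) => A1Const n u ^ (1 / q)
  simp only [ENNReal.orderIsoRpow_apply, ← ENNReal.rpow_mul, hexp] at hpow
  unfold AhatConst
  rw [hpow]
  exact le_iInf₂ fun u hu => iInf₂_le u (hlift u hu)

/-- for `1 ≤ q ≤ p < ∞` with `p > 1`, `N ≥ 1`, `w ∈ Â_{q,N}`, and
`h ∈ L¹_loc` with `Mh` positive and finite a.e., the weight `v = (Mh)^{q-p} w`
belongs to `Â_{p,N+1}` with `‖v‖_{Â_{p,N+1}} ≤ ‖w‖_{Â_{q,N}}^{q/p}`. -/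
theorem stmt17 (n : ℕ) (p q : ℝ) (hq : 1 ≤ q) (hqp : q ≤ p) (hp : 1 < p)
    (N : ℕ) (hN : 1 ≤ N) (w : (Fin n → ℝ) → ℝ) (hw : memAhat n q N w)
    (h : (Fin n → ℝ) → ℝ) (hhm : Measurable h) (hhloc : LocallyIntegrable h volume)
    (hMh : ∀ᵐ x ∂volume, 0 < maxFn n h x ∧ maxFn n h x < ⊤) :
    memAhat n p (N + 1) (fun x => (maxFn n h x).toReal ^ (q - p) * w x) ∧
      AhatConst n p (N + 1) (fun x => (maxFn n h x).toReal ^ (q - p) * w x) ≤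
        AhatConst n q N w ^ (q / p) :=
  stmt17_general n p q hq hqp hp N w hw h hhm hhloc
end
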